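/- Let (D, δ, δ̂) be a coassociative codialgebra with a counit ε satisfying (id ⊗ ε)δ̂ = id and (ε ⊗ id)δ = id, and let A be an associative algebra with unit 1_A. Then the map e := η_A ∘ ε (where η_A(λ) = λ1_A) is a bar-unit of the associative dialgebra L(D, A) with products f ⊣ g = m(f⊗g)δ̂ and f ⊢ g = m(f⊗g)δ: for all f ∈ L(D,A), f ⊣ e = f and e ⊢ f = f. -/
import Mathlib


open TensorProduct

/-- `(f ⊗ id) ∘ g`, rebracketed via the associator. -/
noncomputable def cL {k M : Type*} [Field k] [AddCommGroup M] [Module k M]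
    (f g : M →ₗ[k] M ⊗[k] M) : M →ₗ[k] M ⊗[k] (M ⊗[k] M) :=
  (TensorProduct.assoc k M M M).toLinearMap ∘ₗ (TensorProduct.map f LinearMap.id) ∘ₗ g

/-- `(id ⊗ f) ∘ g`. -/
noncomputable def cR {k M : Type*} [Field k] [AddCommGroup M] [Module k M]
    (f g : M →ₗ[k] M ⊗[k] M) : M →ₗ[k] M ⊗[k] (M ⊗[k] M) :=
  (TensorProduct.map LinearMap.id f) ∘ₗ g

/-- Convolution product `f ⋆_c g := m ∘ (f ⊗ g) ∘ c`. -/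
noncomputable def conv {k D A : Type*} [Field k] [AddCommGroup D] [Module k D]
    [Ring A] [Algebra k A] (c : D →ₗ[k] D ⊗[k] D) (f g : D →ₗ[k] A) : D →ₗ[k] A :=
  LinearMap.mul' k A ∘ₗ TensorProduct.map f g ∘ₗ c

/-- Let `(D, δ, δ̂)` be a coassociative codialgebra with a counit `ε`
satisfying `(id ⊗ ε)δ̂ = id` and `(ε ⊗ id)δ = id`, and `A` a unital associative
algebra. Then `e := η_A ∘ ε` is a bar-unit of the dialgebra `L(D, A)`:
`f ⊣ e = f` and `e ⊢ f = f` for every `f`. -/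
theorem codialgebra_bar_unit {k D A : Type*} [Field k] [AddCommGroup D] [Module k D]
    [Ring A] [Algebra k A]
    (δ δh : D →ₗ[k] D ⊗[k] D)
    (hδ : cL δ δ = cR δ δ) (hδh : cL δh δh = cR δh δh)
    (h1 : cR δh δh = cR δ δh) (h2 : cL δ δ = cL δh δ) (h3 : cL δ δh = cR δh δ)
    (ε : D →ₗ[k] k)
    (hεr : (TensorProduct.rid k D).toLinearMap
        ∘ₗ (TensorProduct.map LinearMap.id ε) ∘ₗ δh = LinearMap.id)
    (hεl : (TensorProduct.lid k D).toLinearMap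
        ∘ₗ (TensorProduct.map ε LinearMap.id) ∘ₗ δ = LinearMap.id) :
    ∀ f : D →ₗ[k] A,
      conv δh f (Algebra.linearMap k A ∘ₗ ε) = f ∧
      conv δ (Algebra.linearMap k A ∘ₗ ε) f = f := by
  intro f
  constructor
  · ext x
    have key : ∀ t : D ⊗[k] D,
        LinearMap.mul' k A (TensorProduct.map f (Algebra.linearMap k A ∘ₗ ε) t)
          = f ((TensorProduct.rid k D) (TensorProduct.map LinearMap.id ε t)) := by
      intro t
      induction t using TensorProduct.induction_on with
      | zero => simp
      | tmul a b =>
          simp [Algebra.smul_def, Algebra.commutes, mul_comm]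
      | add x y hx hy => simp [hx, hy]
    have h := congrArg (fun g : D →ₗ[k] D => g x) hεr
    simp only [LinearMap.comp_apply, LinearMap.id_apply,
      LinearEquiv.coe_coe] at h
    simp only [conv, LinearMap.comp_apply, key, h]
  · ext x
    have key : ∀ t : D ⊗[k] D,
        LinearMap.mul' k A (TensorProduct.map (Algebra.linearMap k A ∘ₗ ε) f t)
          = f ((TensorProduct.lid k D) (TensorProduct.map ε LinearMap.id t)) := by
      intro t
      induction t using TensorProduct.induction_on with
      | zero => simp
      | tmul a b =>
          simp [Algebra.smul_def]
      | add x y hx hy => simp [hx, hy]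
    have h := congrArg (fun g : D →ₗ[k] D => g x) hεl
    simp only [LinearMap.comp_apply, LinearMap.id_apply,
      LinearEquiv.coe_coe] at h
    simp only [conv, LinearMap.comp_apply, key, h]
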